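/- Let C^c_{HL,b}(α) = sup over measurable sets E ⊆ ℝⁿ with 0 < |E| < ∞ of (1/|E|)·|{x ∈ ℝⁿ : M^c_{HL,b} χ_E(x) > α}|. Then C^c_{HL,b}(α) − 1 ∼_n 1/α − 1 as α → 1⁻; that is, there exist constants 0 < c ≤ C depending only on n and a threshold α₀ ∈ (0,1) such that for all α ∈ (α₀, 1), c·(1/α − 1) ≤ C^c_{HL,b}(α) − 1 ≤ C·(1/α − 1). In particular lim_{α→1⁻} C^c_{HL,b}(α) = 1. -/

import Mathlib

open MeasureTheory Set Filter
open scoped ENNReal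

/-- The centered Hardy–Littlewood maximal operator with respect to
Euclidean balls on `ℝⁿ`. -/
noncomputable def MHLbc (n : ℕ) (f : EuclideanSpace ℝ (Fin n) → ℝ≥0∞)
    (x : EuclideanSpace ℝ (Fin n)) : ℝ≥0∞ :=
  ⨆ (r : ℝ) (_ : 0 < r),
    (∫⁻ y in Metric.ball x r, f y) / volume (Metric.ball x r)

/-- The sharp Tauberian constant `C^c_{HL,b}(α)` of the centered
Hardy–Littlewood maximal operator with respect to balls. -/
noncomputable def CHLbc (n : ℕ) (α : ℝ) : ℝ≥0∞ :=
  ⨆ (E : Set (EuclideanSpace ℝ (Fin n))) (_ : MeasurableSet E)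
    (_ : 0 < volume E) (_ : volume E < ⊤),
    volume {x : EuclideanSpace ℝ (Fin n) |
      MHLbc n (E.indicator 1) x > ENNReal.ofReal α} / volume E

/-
Upper bound: a point `x` of the superlevel set `S = {M χ_E > α}` outside `E` is the centre of a
ball `B` in which `E` has density greater than `α`, so `|B \ E| ≤ (1/α - 1) |E ∩ B|`; since
`α |B| < |E|`, these radii are bounded. The Besicovitch covering theorem extracts from these balls
`N = N(n)` disjoint subfamilies covering `S \ E`, hence `|S \ E| ≤ N (1/α - 1) |E|`.

Lower bound: take `E = B(0, 1) \ {|x₁| ≤ δ}` with `δ ≍ 1 - α`. As `E` is open, `E ⊆ S`. A ball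
of radius `1/2` centred near the origin misses `E` only in a slab of relative volume `≍ δ`, less
than `1 - α`, so a box of width `2δ` around the hyperplane `x₁ = 0` near the origin lies in
`S \ E`; it has volume `≍ δ |E| ≍ (1 - α) |E|`.
-/

open Metric

section MaximalFunction

variable {n : ℕ}

theorem lt_MHLbc_indicator_iff {E : Set (EuclideanSpace ℝ (Fin n))} (hE : MeasurableSet E)
    {a : ℝ≥0∞} {x : EuclideanSpace ℝ (Fin n)} :
    a < MHLbc n (E.indicator 1) x ↔
      ∃ r > 0, a * volume (ball x r) < volume (E ∩ ball x r) := by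
  simp only [MHLbc, lt_iSup_iff, lintegral_indicator_one hE, Measure.restrict_apply hE,
    exists_prop]
  refine exists_congr fun r => and_congr_right fun hr => ?_
  exact ENNReal.lt_div_iff_mul_lt (Or.inl (measure_ball_pos _ _ hr).ne')
    (Or.inl measure_ball_lt_top.ne)

theorem subset_setOf_lt_MHLbc_indicator {E : Set (EuclideanSpace ℝ (Fin n))} (hE : IsOpen E)
    {a : ℝ≥0∞} (ha : a < 1) : E ⊆ {x | a < MHLbc n (E.indicator 1) x} := by
  intro x hx
  obtain ⟨r, hr, hball⟩ := Metric.isOpen_iff.mp hE x hx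
  refine (lt_MHLbc_indicator_iff hE.measurableSet).2 ⟨r, hr, ?_⟩
  rw [inter_eq_self_of_subset_right hball]
  simpa using
    ENNReal.mul_lt_mul_left (measure_ball_pos volume x hr).ne' measure_ball_lt_top.ne ha

theorem lt_MHLbc_indicator_of_measure_sdiff_lt {E : Set (EuclideanSpace ℝ (Fin n))}
    (hE : MeasurableSet E) {a : ℝ≥0∞} {x : EuclideanSpace ℝ (Fin n)} {r : ℝ} (hr : 0 < r)
    (h : volume (ball x r \ E) < (1 - a) * volume (ball x r)) :
    a < MHLbc n (E.indicator 1) x := by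
  refine (lt_MHLbc_indicator_iff hE).2 ⟨r, hr, ?_⟩
  have ha : a ≤ 1 := by
    by_contra! ha
    simp [tsub_eq_zero_of_le ha.le] at h
  rw [inter_comm]
  by_contra! hle
  refine lt_irrefl (volume (ball x r)) ?_
  calc volume (ball x r) = volume (ball x r ∩ E) + volume (ball x r \ E) :=
        (measure_inter_add_sdiff _ hE).symm
    _ < a * volume (ball x r) + (1 - a) * volume (ball x r) :=
        ENNReal.add_lt_add_of_le_of_lt
          (measure_inter_lt_top_of_left_ne_top measure_ball_lt_top.ne).ne hle h
    _ = volume (ball x r) := by rw [← add_mul, add_tsub_cancel_of_le ha, one_mul]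

theorem div_le_CHLbc {E : Set (EuclideanSpace ℝ (Fin n))} (hE : MeasurableSet E)
    (hE₀ : 0 < volume E) (hE_top : volume E < ⊤) (α : ℝ) :
    volume {x | MHLbc n (E.indicator 1) x > ENNReal.ofReal α} / volume E ≤ CHLbc n α :=
  le_iSup_of_le E <| le_iSup_of_le hE <| le_iSup_of_le hE₀ <| le_iSup_of_le hE_top le_rfl

theorem one_add_div_le_CHLbc {E G : Set (EuclideanSpace ℝ (Fin n))} (hE : IsOpen E)
    (hE₀ : 0 < volume E) (hE_top : volume E < ⊤) {α : ℝ} (hα : α < 1) (hEG : Disjoint E G)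
    (hG : G ⊆ {x | MHLbc n (E.indicator 1) x > ENNReal.ofReal α}) :
    1 + volume G / volume E ≤ CHLbc n α := by
  have hαE := subset_setOf_lt_MHLbc_indicator (n := n) hE (ENNReal.ofReal_lt_one.2 hα)
  calc 1 + volume G / volume E = volume (E ∪ G) / volume E := by
        rw [measure_union' hEG hE.measurableSet, ENNReal.add_div,
          ENNReal.div_self hE₀.ne' hE_top.ne]
    _ ≤ _ := ENNReal.div_le_div_right (measure_mono (union_subset hαE hG)) _
    _ ≤ CHLbc n α := div_le_CHLbc hE.measurableSet hE₀ hE_top α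

end MaximalFunction

section Besicovitch

variable {X : Type*} [MeasurableSpace X]

theorem measure_sdiff_le_of_mul_lt_measure_inter {μ : Measure X} {B E : Set X} {a : ℝ≥0∞}
    (hE : MeasurableSet E) (ha : a ≠ 0) (h : a * μ B < μ (E ∩ B)) :
    μ (B \ E) ≤ (a⁻¹ - 1) * μ (E ∩ B) := by
  rw [inter_comm] at h ⊢
  have hB : μ B ≠ ⊤ := fun hB => by simp [hB, ha] at h
  have hBE : μ (B ∩ E) ≠ ⊤ := measure_inter_ne_top_of_left_ne_top hB
  rw [ENNReal.sub_mul fun _ _ => hBE, one_mul]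
  refine ENNReal.le_sub_of_add_le_left hBE ?_
  rw [measure_inter_add_sdiff _ hE, ← ENNReal.div_eq_inv_mul,
    ENNReal.le_div_iff_mul_le (Or.inl ha) (Or.inr hBE), mul_comm]
  exact h.le

variable [MetricSpace X] [SecondCountableTopology X] [OpensMeasurableSpace X]
  [HasBesicovitchCovering X]

theorem exists_measure_sdiff_le_of_forall_mul_lt_measure_inter_ball :
    ∃ N : ℕ, ∀ (μ : Measure X) (E S : Set X) (a : ℝ≥0∞) (R : ℝ), MeasurableSet E → a ≠ 0 →
      (∀ x ∈ S, ∃ r ∈ Ioc 0 R, a * μ (ball x r) < μ (E ∩ ball x r)) →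
      μ (S \ E) ≤ N * ((a⁻¹ - 1) * μ E) := by
  obtain ⟨N, τ, hτ, hN⟩ := HasBesicovitchCovering.no_satelliteConfig (α := X)
  refine ⟨N, fun μ E S a R hE ha hS => ?_⟩
  choose! r hr hdense using hS
  let q : Besicovitch.BallPackage S X :=
    { c := (↑), r := fun x => r x, rpos := fun x => (hr x x.2).1, r_bound := R,
      r_le := fun x => (hr x x.2).2 }
  obtain ⟨s, hdisj, hcover⟩ := Besicovitch.exist_disjoint_covering_families hτ hN q
  have hcount : ∀ i, (s i).Countable := fun i =>
    (hdisj i).countable_of_nonempty_interior fun j _ =>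
      ⟨j, ball_subset_interior_closedBall (mem_ball_self (hr j j.2).1)⟩
  have hfamily : ∀ i, μ (⋃ j ∈ s i, ball (j : X) (r j) \ E) ≤ (a⁻¹ - 1) * μ E := by
    intro i
    rw [measure_biUnion (hcount i)
      ((hdisj i).mono fun j => sdiff_subset.trans ball_subset_closedBall)
      fun j _ => measurableSet_ball.diff hE]
    calc ∑' j : s i, μ (ball (j : X) (r j) \ E)
        ≤ ∑' j : s i, (a⁻¹ - 1) * μ (E ∩ ball (j : X) (r j)) :=
          ENNReal.tsum_le_tsum fun j => measure_sdiff_le_of_mul_lt_measure_inter hE ha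
            (hdense j j.1.2)
      _ = (a⁻¹ - 1) * μ (⋃ j ∈ s i, E ∩ ball (j : X) (r j)) := by
          rw [ENNReal.tsum_mul_left, measure_biUnion (hcount i)
            ((hdisj i).mono fun j => inter_subset_right.trans ball_subset_closedBall)
            fun j _ => hE.inter measurableSet_ball]
      _ ≤ (a⁻¹ - 1) * μ E := by gcongr; exact iUnion₂_subset fun j _ => inter_subset_left
  calc μ (S \ E) ≤ μ (⋃ i, ⋃ j ∈ s i, ball (j : X) (r j) \ E) := by
        refine measure_mono fun x hx => ?_
        obtain ⟨i, hi⟩ := mem_iUnion.1 (hcover ⟨⟨x, hx.1⟩, rfl⟩)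
        obtain ⟨j, hj, hxj⟩ := mem_iUnion₂.1 hi
        exact mem_iUnion.2 ⟨i, mem_iUnion₂.2 ⟨j, hj, hxj, hx.2⟩⟩
    _ ≤ ∑ i, μ (⋃ j ∈ s i, ball (j : X) (r j) \ E) := measure_iUnion_fintype_le _ _
    _ ≤ ∑ _i : Fin N, (a⁻¹ - 1) * μ E := Finset.sum_le_sum fun i _ => hfamily i
    _ = N * ((a⁻¹ - 1) * μ E) := by simp

end Besicovitch

theorem exists_le_of_addHaar_ball_le {F : Type*} [NormedAddCommGroup F] [NormedSpace ℝ F]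
    [FiniteDimensional ℝ F] [Nontrivial F] [MeasurableSpace F] [BorelSpace F]
    (μ : Measure F) [μ.IsAddHaarMeasure] {M : ℝ≥0∞} (hM : M ≠ ⊤) :
    ∃ R : ℝ, ∀ (x : F) (r : ℝ), μ (ball x r) ≤ M → r ≤ R := by
  have hω₀ : μ (ball (0 : F) 1) ≠ 0 := (measure_ball_pos μ 0 one_pos).ne'
  refine ⟨max 1 (M / μ (ball 0 1)).toReal, fun x r hr => ?_⟩
  by_contra! hR
  have hr₁ : 1 ≤ r := (le_max_left _ _).trans hR.le
  have hMr : M / μ (ball 0 1) < ENNReal.ofReal (r ^ Module.finrank ℝ F) := by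
    rw [← ENNReal.ofReal_toReal (ENNReal.div_ne_top hM hω₀)]
    refine ENNReal.ofReal_lt_ofReal_iff_of_nonneg ENNReal.toReal_nonneg |>.2 ?_
    exact (le_max_right _ _).trans_lt (hR.trans_le (le_self_pow₀ hr₁ Module.finrank_pos.ne'))
  rw [ENNReal.div_lt_iff (Or.inl hω₀) (Or.inl measure_ball_lt_top.ne),
    ← Measure.addHaar_ball_of_pos μ x (by linarith)] at hMr
  exact hMr.not_ge hr

theorem exists_CHLbc_le_one_add {n : ℕ} (hn : 1 ≤ n) :
    ∃ C : ℝ, ∀ α ∈ Ioo (0 : ℝ) 1, CHLbc n α ≤ 1 + ENNReal.ofReal (C * (1 / α - 1)) := by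
  have : NeZero n := ⟨by omega⟩
  obtain ⟨N, hN⟩ := exists_measure_sdiff_le_of_forall_mul_lt_measure_inter_ball
    (X := EuclideanSpace ℝ (Fin n))
  refine ⟨N, fun α ⟨hα₀, hα₁⟩ => ?_⟩
  have ha : ENNReal.ofReal α ≠ 0 := by simpa using hα₀
  have hconst : (ENNReal.ofReal α)⁻¹ - 1 = ENNReal.ofReal (1 / α - 1) := by
    rw [ENNReal.ofReal_sub _ zero_le_one, one_div, ENNReal.ofReal_inv_of_pos hα₀,
      ENNReal.ofReal_one]
  refine iSup_le fun E => iSup_le fun hE => iSup_le fun hE₀ => iSup_le fun hE_top => ?_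
  set S := {x | MHLbc n (E.indicator 1) x > ENNReal.ofReal α}
  obtain ⟨R, hR⟩ := exists_le_of_addHaar_ball_le (volume : Measure (EuclideanSpace ℝ (Fin n)))
    (ENNReal.div_ne_top hE_top.ne ha)
  have hS : ∀ x ∈ S, ∃ r ∈ Ioc 0 R,
      ENNReal.ofReal α * volume (ball x r) < volume (E ∩ ball x r) := by
    intro x hx
    obtain ⟨r, hr, hdense⟩ := (lt_MHLbc_indicator_iff hE).1 hx
    refine ⟨r, ⟨hr, hR x r ?_⟩, hdense⟩
    rw [ENNReal.le_div_iff_mul_le (Or.inl ha) (Or.inl ENNReal.ofReal_ne_top), mul_comm]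
    exact hdense.le.trans (measure_mono inter_subset_left)
  rw [ENNReal.div_le_iff hE₀.ne' hE_top.ne]
  calc volume S ≤ volume (S ∩ E) + volume (S \ E) := measure_le_inter_add_sdiff _ _ _
    _ ≤ volume E + volume (S \ E) := by gcongr; exact inter_subset_right
    _ ≤ volume E + N * ((ENNReal.ofReal α)⁻¹ - 1) * volume E := by
        rw [mul_assoc]; gcongr; exact hN _ E S _ R hE ha hS
    _ = (1 + ENNReal.ofReal (N * (1 / α - 1))) * volume E := by
        rw [hconst, ENNReal.ofReal_mul (Nat.cast_nonneg N), ENNReal.ofReal_natCast, one_add_mul]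

section Boxes

variable {n : ℕ}

theorem EuclideanSpace.volume_setOf_forall_mem (I : Fin n → Set ℝ) :
    volume {y : EuclideanSpace ℝ (Fin n) | ∀ j, y j ∈ I j} = ∏ j, volume (I j) := by
  rw [← volume_pi_pi I,
    ← (EuclideanSpace.volume_preserving_symm_measurableEquiv_toLp (Fin n)).measure_preimage_equiv]
  congr 1
  ext y
  simp [Set.mem_pi]

theorem EuclideanSpace.volume_ball_le_ofReal_two_mul_pow (x : EuclideanSpace ℝ (Fin n)) (r : ℝ) :
    volume (ball x r) ≤ ENNReal.ofReal (2 * r) ^ n := by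
  calc volume (ball x r)
      ≤ volume {y : EuclideanSpace ℝ (Fin n) | ∀ j, y j ∈ Icc (x j - r) (x j + r)} := by
        refine measure_mono fun y hy j => ?_
        have := (PiLp.dist_apply_le y x j).trans (mem_ball.1 hy).le
        rw [Real.dist_eq, abs_le] at this
        constructor <;> linarith
    _ = ENNReal.ofReal (2 * r) ^ n := by
        rw [EuclideanSpace.volume_setOf_forall_mem]
        simp [Real.volume_Icc, two_mul]

theorem EuclideanSpace.volume_setOf_forall_mem_eq_mul_pow {I : Fin n → Set ℝ} (i : Fin n) {b : ℝ≥0∞}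
    (hb : ∀ j ≠ i, volume (I j) = b) :
    volume {y : EuclideanSpace ℝ (Fin n) | ∀ j, y j ∈ I j} = volume (I i) * b ^ (n - 1) := by
  rw [EuclideanSpace.volume_setOf_forall_mem, ← Finset.mul_prod_erase _ _ (Finset.mem_univ i),
    Finset.prod_congr rfl fun j hj => hb j (Finset.ne_of_mem_erase hj), Finset.prod_const,
    Finset.card_erase_of_mem (Finset.mem_univ i), Finset.card_univ, Fintype.card_fin]

def slabBox (i : Fin n) (δ ρ : ℝ) (c : EuclideanSpace ℝ (Fin n)) :
    Set (EuclideanSpace ℝ (Fin n)) :=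
  {y | ∀ j, y j ∈ if j = i then Icc (-δ) δ else Icc (c j - ρ) (c j + ρ)}

theorem volume_slabBox (i : Fin n) (c : EuclideanSpace ℝ (Fin n)) {δ ρ : ℝ} (hδ : 0 ≤ δ)
    (hρ : 0 ≤ ρ) : volume (slabBox i δ ρ c) = ENNReal.ofReal (2 * δ * (2 * ρ) ^ (n - 1)) := by
  rw [slabBox, EuclideanSpace.volume_setOf_forall_mem_eq_mul_pow i (b := ENNReal.ofReal (2 * ρ))
    fun j hj => ?_]
  · rw [if_pos rfl, Real.volume_Icc, ← ENNReal.ofReal_pow (by positivity),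
      ← ENNReal.ofReal_mul (by linarith)]
    ring_nf
  · rw [if_neg hj, Real.volume_Icc]
    ring_nf

theorem ball_inter_setOf_abs_le_subset_slabBox (i : Fin n) (c : EuclideanSpace ℝ (Fin n))
    (r δ : ℝ) : ball c r ∩ {y | |y i| ≤ δ} ⊆ slabBox i δ r c := by
  rintro y ⟨hyc, hyi⟩ j
  split_ifs with hj
  · exact abs_le.1 (hj ▸ hyi)
  · have := (PiLp.dist_apply_le y c j).trans (mem_ball.1 hyc).le
    rw [Real.dist_eq, abs_le] at this
    constructor <;> linarith

theorem EuclideanSpace.norm_le_sum_abs {ι : Type*} [Fintype ι] (y : EuclideanSpace ℝ ι) :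
    ‖y‖ ≤ ∑ j, |y j| := by
  rw [EuclideanSpace.norm_eq, Real.sqrt_le_left (Finset.sum_nonneg fun j _ => abs_nonneg _)]
  simpa using Finset.sum_sq_le_sq_sum_of_nonneg fun j _ => abs_nonneg (y j)

theorem norm_le_of_mem_slabBox_zero {i : Fin n} {δ ρ : ℝ} (hρ : 0 ≤ ρ)
    {y : EuclideanSpace ℝ (Fin n)} (hy : y ∈ slabBox i δ ρ 0) : ‖y‖ ≤ δ + n * ρ := by
  refine (EuclideanSpace.norm_le_sum_abs y).trans ?_
  calc ∑ j, |y j| ≤ ∑ j, ((if j = i then δ else 0) + ρ) := by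
        refine Finset.sum_le_sum fun j _ => ?_
        have := hy j
        split_ifs at this ⊢ with hj
        · linarith [abs_le.2 this]
        · simpa [abs_le] using this
    _ = δ + n * ρ := by simp [Finset.sum_add_distrib]

end Boxes

/-- The witness is `E = B(0, 1) \ {y | |yᵢ| ≤ δ}`; `hdense` makes `E` fill more than the
proportion `α` of every ball of radius `1/2` centred in the box. -/
theorem one_add_div_le_CHLbc_of_slab {n : ℕ} (i : Fin n) {δ ρ α : ℝ} (hδ : 0 < δ)
    (hρ : 0 ≤ ρ) (hδρ : δ + n * ρ < 1 / 2) (hα : α < 1)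
    (hdense : ENNReal.ofReal (2 * δ) <
      (1 - ENNReal.ofReal α) * volume (ball (0 : EuclideanSpace ℝ (Fin n)) (1 / 2))) :
    1 + volume (slabBox i δ ρ 0) / volume (ball (0 : EuclideanSpace ℝ (Fin n)) 1) ≤
      CHLbc n α := by
  set E := ball (0 : EuclideanSpace ℝ (Fin n)) 1 \ {y | |y i| ≤ δ}
  have hEo : IsOpen E :=
    isOpen_ball.sdiff (isClosed_le (continuous_abs.comp (EuclideanSpace.proj i).continuous)
      continuous_const)
  have hE₀ : 0 < volume E := by
    refine hEo.measure_pos volume ⟨EuclideanSpace.single i (1 / 2), by norm_num, ?_⟩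
    have : δ < 1 / 2 := by nlinarith
    simpa using this
  have hE_le : volume E ≤ volume (ball (0 : EuclideanSpace ℝ (Fin n)) 1) :=
    measure_mono sdiff_subset
  have hEG : Disjoint E (slabBox i δ ρ 0) :=
    Set.disjoint_left.2 fun y hyE hyG => hyE.2 (abs_le.2 (by simpa using hyG i))
  have hG : slabBox i δ ρ 0 ⊆ {x | MHLbc n (E.indicator 1) x > ENNReal.ofReal α} := by
    intro y hy
    have hy_norm : ‖y‖ < 1 / 2 := (norm_le_of_mem_slabBox_zero hρ hy).trans_lt hδρ
    refine lt_MHLbc_indicator_of_measure_sdiff_lt hEo.measurableSet (r := 1 / 2) one_half_pos ?_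
    calc volume (ball y (1 / 2) \ E) ≤ volume (slabBox i δ (1 / 2) y) := by
          refine measure_mono fun z hz =>
            ball_inter_setOf_abs_le_subset_slabBox i y _ δ ⟨hz.1, ?_⟩
          by_contra hzi
          refine hz.2 ⟨ball_subset_ball' ?_ hz.1, hzi⟩
          rw [dist_zero_right]
          linarith
      _ = ENNReal.ofReal (2 * δ) := by
          rw [volume_slabBox i y hδ.le one_half_pos.le]
          norm_num
      _ < _ := by rwa [Measure.addHaar_ball_center]
  calc 1 + volume (slabBox i δ ρ 0) / volume (ball (0 : EuclideanSpace ℝ (Fin n)) 1)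
      ≤ 1 + volume (slabBox i δ ρ 0) / volume E := by gcongr
    _ ≤ CHLbc n α :=
        one_add_div_le_CHLbc hEo hE₀ (hE_le.trans_lt measure_ball_lt_top) hα hEG hG

theorem exists_one_add_le_CHLbc {n : ℕ} (hn : 1 ≤ n) :
    ∃ c > 0, ∀ α ∈ Ioo (1 / 2 : ℝ) 1, 1 + ENNReal.ofReal (c * (1 / α - 1)) ≤ CHLbc n α := by
  set ω := (volume (ball (0 : EuclideanSpace ℝ (Fin n)) 1)).toReal
  have hω : volume (ball (0 : EuclideanSpace ℝ (Fin n)) 1) = ENNReal.ofReal ω :=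
    (ENNReal.ofReal_toReal measure_ball_lt_top.ne).symm
  have hω₀ : 0 < ω :=
    ENNReal.toReal_pos (measure_ball_pos _ _ one_pos).ne' measure_ball_lt_top.ne
  have hω_le : ω ≤ 2 ^ n := by
    have := hω ▸ EuclideanSpace.volume_ball_le_ofReal_two_mul_pow (0 : EuclideanSpace ℝ (Fin n)) 1
    rwa [mul_one, ← ENNReal.ofReal_pow zero_le_two,
      ENNReal.ofReal_le_ofReal_iff (by positivity)] at this
  set ρ : ℝ := 1 / (8 * n)
  have hnρ : n * ρ = 1 / 8 := by
    have : (n : ℝ) ≠ 0 := by positivity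
    simp only [ρ]; field_simp
  refine ⟨(2 * ρ) ^ (n - 1) / 2 ^ (n + 2), by positivity, fun α ⟨hα₂, hα₁⟩ => ?_⟩
  have h1α : 0 < 1 - α := by linarith
  -- `2δ` is half the proportion `1 - α` of the volume `ω / 2ⁿ` of a ball of radius `1/2`.
  set δ := (1 - α) * ω / 2 ^ (n + 2)
  have hδ : 0 < δ := by positivity
  have hδρ : δ + n * ρ < 1 / 2 := by
    have : δ ≤ 1 / 8 := by
      rw [div_le_iff₀ (by positivity), pow_add]
      nlinarith
    linarith
  have hdense : ENNReal.ofReal (2 * δ) <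
      (1 - ENNReal.ofReal α) * volume (ball (0 : EuclideanSpace ℝ (Fin n)) (1 / 2)) := by
    rw [Measure.addHaar_ball_of_pos _ _ one_half_pos, finrank_euclideanSpace_fin, hω,
      ← ENNReal.ofReal_mul (by positivity), ← ENNReal.ofReal_one,
      ← ENNReal.ofReal_sub _ (by linarith : (0 : ℝ) ≤ α), ← ENNReal.ofReal_mul h1α.le,
      ENNReal.ofReal_lt_ofReal_iff (by positivity)]
    have h2δ : 2 * δ = (1 - α) * ((1 / 2) ^ n * ω) / 2 := by
      simp only [δ]; rw [pow_add, one_div_pow]; field_simp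
    have : 0 < (1 - α) * ((1 / 2) ^ n * ω) := by positivity
    linarith
  refine le_trans ?_ (one_add_div_le_CHLbc_of_slab ⟨0, hn⟩ hδ (by positivity) hδρ hα₁ hdense)
  rw [volume_slabBox _ 0 hδ.le (by positivity), hω, ← ENNReal.ofReal_div_of_pos hω₀]
  gcongr 1 + ENNReal.ofReal ?_
  have hbound :
      2 * δ * (2 * ρ) ^ (n - 1) / ω = (2 * ρ) ^ (n - 1) / 2 ^ (n + 2) * (2 * (1 - α)) := by
    simp only [δ]; field_simp
  rw [hbound]
  gcongr
  rw [div_sub_one (by linarith), div_le_iff₀ (by linarith)]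
  nlinarith

theorem tendsto_one_add_ofReal_mul_one_div_sub_one (C : ℝ) :
    Tendsto (fun α : ℝ => 1 + ENNReal.ofReal (C * (1 / α - 1))) (nhds 1) (nhds 1) := by
  have hcont : ContinuousAt (fun α : ℝ => C * (1 / α - 1)) 1 := by fun_prop (disch := norm_num)
  simpa using tendsto_const_nhds.add ((ENNReal.continuous_ofReal.tendsto _).comp hcont.tendsto)

theorem centered_ball_solyanik_sharp (n : ℕ) (hn : 1 ≤ n) :
    (∃ c C : ℝ, 0 < c ∧ c ≤ C ∧ ∃ α₀ ∈ Set.Ioo (0 : ℝ) 1,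
      ∀ α ∈ Set.Ioo α₀ 1,
        ENNReal.ofReal (c * (1 / α - 1)) ≤ CHLbc n α - 1 ∧
        CHLbc n α - 1 ≤ ENNReal.ofReal (C * (1 / α - 1))) ∧
    Filter.Tendsto (CHLbc n) (nhdsWithin 1 (Set.Iio 1)) (nhds 1) := by
  obtain ⟨c, hc, hlower⟩ := exists_one_add_le_CHLbc hn
  obtain ⟨C, hupper⟩ := exists_CHLbc_le_one_add hn
  have hupper' : ∀ α ∈ Ioo (1 / 2 : ℝ) 1, CHLbc n α ≤ 1 + ENNReal.ofReal (C * (1 / α - 1)) :=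
    fun α hα => hupper α ⟨by linarith [hα.1], hα.2⟩
  refine ⟨⟨c, max c C, hc, le_max_left c C, 1 / 2, ⟨by norm_num, by norm_num⟩,
    fun α hα => ⟨ENNReal.le_sub_of_add_le_left ENNReal.one_ne_top (hlower α hα), ?_⟩⟩, ?_⟩
  · refine tsub_le_iff_left.2 ((hupper' α hα).trans ?_)
    have : 0 ≤ 1 / α - 1 := sub_nonneg.2 (one_le_one_div (by linarith [hα.1]) hα.2.le)
    gcongr
    exact le_max_right c C
  · have hmem : Ioo (1 / 2 : ℝ) 1 ∈ nhdsWithin 1 (Iio 1) := Ioo_mem_nhdsLT (by norm_num)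
    refine tendsto_of_tendsto_of_tendsto_of_le_of_le' tendsto_const_nhds
      ((tendsto_one_add_ofReal_mul_one_div_sub_one C).mono_left nhdsWithin_le_nhds)
      (eventually_of_mem hmem fun α hα => le_self_add.trans (hlower α hα))
      (eventually_of_mem hmem hupper')
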